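/- Fix a real number α with 1/2 < α ≤ 1 and define K : (0,3/5) ∪ (1,∞) → ℝ by K(c) = (c−1)²·((5c−3)/(4(c−1)))^{1/α}·( 1 + 5(c−1)/((5c−3)(3α−1)) ). Then K'(c) < 0 for every c ∈ (0,3/5), and K'(c) > 0 for every c > 1; in particular K' has no zeros in (0,3/5) ∪ (1,∞). -/

import Mathlib

/-!
Writing `u = (5c - 3) / (4(c - 1))`, a direct computation gives
`K'(c) = u ^ (1/α) * (c - 1) * Q(c) / (3α(3α - 1)(5c - 3)²)` with the quadratic
`Q(c) = 450α²c² - 60α(9α + 2)c + 162α² + 60α + 12`, so `K'` has the sign of `c - 1` wherever `Q > 0`.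
Positivity of `Q` comes from the two decompositions
`Q = 30α(3/5 - c)(9α + 4 - 15αc) + 12(1 - α)` (for `c < 3/5`, using `α ≤ 1`) and
`Q = 30α(c - 1)(15αc - 3α - 4) + 12(3α - 1)(2α - 1)` (for `c > 1`, using `α > 1/2`).
-/

open Set Filter

noncomputable section

namespace GfBBM

def momentum (α c : ℝ) : ℝ :=
  (c - 1) ^ 2 * ((5 * c - 3) / (4 * (c - 1))) ^ ((1 : ℝ) / α) *
    (1 + 5 * (c - 1) / ((5 * c - 3) * (3 * α - 1)))

def momentumQuad (α c : ℝ) : ℝ :=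
  450 * α ^ 2 * c ^ 2 - 60 * α * (9 * α + 2) * c + 162 * α ^ 2 + 60 * α + 12

-- `u > 0` already forces `c ≠ 1` and `5c ≠ 3`, since division by zero returns `0`.
theorem hasDerivAt_momentum {α c : ℝ} (hα : α ≠ 0) (hβ : 3 * α - 1 ≠ 0)
    (hu : 0 < (5 * c - 3) / (4 * (c - 1))) :
    HasDerivAt (momentum α)
      (((5 * c - 3) / (4 * (c - 1))) ^ ((1 : ℝ) / α) *
        ((c - 1) * momentumQuad α c / (3 * α * (3 * α - 1) * (5 * c - 3) ^ 2))) c := by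
  have hc1 : c - 1 ≠ 0 := fun h => by simp [h] at hu
  have hc3 : 5 * c - 3 ≠ 0 := fun h => by simp [h] at hu
  have hc : HasDerivAt (fun c : ℝ => c - 1) 1 c := (hasDerivAt_id c).sub_const 1
  have hnum : HasDerivAt (fun c : ℝ => 5 * c - 3) 5 c := by
    simpa using ((hasDerivAt_id c).const_mul 5).sub_const 3
  have hpow : HasDerivAt (fun c : ℝ => ((5 * c - 3) / (4 * (c - 1))) ^ ((1 : ℝ) / α))
      ((5 * (4 * (c - 1)) - (5 * c - 3) * (4 * 1)) / (4 * (c - 1)) ^ 2 * (1 / α) *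
        ((5 * c - 3) / (4 * (c - 1))) ^ ((1 : ℝ) / α - 1)) c :=
    (hnum.div (hc.const_mul 4) (by positivity)).rpow_const (Or.inl hu.ne')
  have hlast : HasDerivAt (fun c : ℝ => 1 + 5 * (c - 1) / ((5 * c - 3) * (3 * α - 1)))
      ((5 * 1 * ((5 * c - 3) * (3 * α - 1)) - 5 * (c - 1) * (5 * (3 * α - 1))) /
        ((5 * c - 3) * (3 * α - 1)) ^ 2) c :=
    ((hc.const_mul 5).div (hnum.mul_const _) (mul_ne_zero hc3 hβ)).const_add 1
  refine ((hc.fun_pow 2).fun_mul hpow |>.fun_mul hlast).congr_deriv ?_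
  rw [Real.rpow_sub hu, Real.rpow_one]
  generalize ((5 * c - 3) / (4 * (c - 1))) ^ ((1 : ℝ) / α) = P
  unfold momentumQuad
  have hc3' : c * 5 - 3 ≠ 0 := by rwa [mul_comm]
  field_simp
  ring

theorem momentumQuad_pos_of_lt {α c : ℝ} (hα₀ : 0 < α) (hα₁ : α ≤ 1) (hc : c < 3 / 5) :
    0 < momentumQuad α c := by
  have hfac : 0 < 9 * α + 4 - 15 * α * c := by nlinarith
  have hdecomp : momentumQuad α c =
      30 * α * (3 / 5 - c) * (9 * α + 4 - 15 * α * c) + 12 * (1 - α) := by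
    unfold momentumQuad; ring
  rw [hdecomp]
  exact add_pos_of_pos_of_nonneg (mul_pos (by nlinarith) hfac) (by linarith)

theorem momentumQuad_pos_of_one_lt {α c : ℝ} (hα : 1 / 2 < α) (hc : 1 < c) :
    0 < momentumQuad α c := by
  have hfac : 0 < 15 * α * c - 3 * α - 4 := by nlinarith
  have hdecomp : momentumQuad α c =
      30 * α * (c - 1) * (15 * α * c - 3 * α - 4) + 12 * (3 * α - 1) * (2 * α - 1) := by
    unfold momentumQuad; ring
  rw [hdecomp]
  exact add_pos (mul_pos (by nlinarith) hfac) (mul_pos (by linarith) (by linarith))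

theorem deriv_momentum_neg_of_lt {α c : ℝ} (hα₀ : 1 / 3 < α) (hα₁ : α ≤ 1) (hc : c < 3 / 5) :
    deriv (momentum α) c < 0 := by
  have hu : 0 < (5 * c - 3) / (4 * (c - 1)) := div_pos_of_neg_of_neg (by linarith) (by linarith)
  have hden : 0 < 3 * α * (3 * α - 1) * (5 * c - 3) ^ 2 :=
    mul_pos (mul_pos (by positivity) (by linarith)) (sq_pos_of_neg (by linarith))
  rw [(hasDerivAt_momentum (by positivity) (by linarith) hu).deriv]
  exact mul_neg_of_pos_of_neg (Real.rpow_pos_of_pos hu _) <| div_neg_of_neg_of_pos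
    (mul_neg_of_neg_of_pos (by linarith) (momentumQuad_pos_of_lt (by linarith) hα₁ hc)) hden

theorem deriv_momentum_pos_of_one_lt {α c : ℝ} (hα : 1 / 2 < α) (hc : 1 < c) :
    0 < deriv (momentum α) c := by
  have hu : 0 < (5 * c - 3) / (4 * (c - 1)) := div_pos (by linarith) (by linarith)
  have hden : 0 < 3 * α * (3 * α - 1) * (5 * c - 3) ^ 2 :=
    mul_pos (mul_pos (by positivity) (by linarith)) (pow_pos (by linarith) 2)
  rw [(hasDerivAt_momentum (by positivity) (by linarith) hu).deriv]
  exact mul_pos (Real.rpow_pos_of_pos hu _) <|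
    div_pos (mul_pos (by linarith) (momentumQuad_pos_of_one_lt hα hc)) hden

end GfBBM

end

/-- For `1/2 < α ≤ 1` (case `p = 1`): `K' < 0` on `(0,3/5)` and `K' > 0` on `(1,∞)`;
in particular `K'` has no zeros in `(0,3/5) ∪ (1,∞)`. -/
theorem stmt_16 (α : ℝ) (hα : 1 / 2 < α) (hα' : α ≤ 1)
    (K : ℝ → ℝ)
    (hK : ∀ c ∈ Set.Ioo (0 : ℝ) (3 / 5) ∪ Set.Ioi (1 : ℝ),
      K c = (c - 1) ^ 2 * ((5 * c - 3) / (4 * (c - 1))) ^ ((1 : ℝ) / α) *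
        (1 + 5 * (c - 1) / ((5 * c - 3) * (3 * α - 1)))) :
    (∀ c ∈ Set.Ioo (0 : ℝ) (3 / 5), deriv K c < 0) ∧
    (∀ c : ℝ, 1 < c → 0 < deriv K c) ∧
    (∀ c ∈ Set.Ioo (0 : ℝ) (3 / 5) ∪ Set.Ioi (1 : ℝ), deriv K c ≠ 0) := by
  have hKderiv : ∀ c ∈ Ioo (0 : ℝ) (3 / 5) ∪ Ioi 1, deriv K c = deriv (GfBBM.momentum α) c :=
    fun c hc => EventuallyEq.deriv_eq <|
      eventuallyEq_of_mem ((isOpen_Ioo.union isOpen_Ioi).mem_nhds hc) hK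
  have hlow : ∀ c ∈ Ioo (0 : ℝ) (3 / 5), deriv K c < 0 := fun c hc => by
    rw [hKderiv c (Or.inl hc)]
    exact GfBBM.deriv_momentum_neg_of_lt (by linarith) hα' hc.2
  have hhigh : ∀ c : ℝ, 1 < c → 0 < deriv K c := fun c hc => by
    rw [hKderiv c (Or.inr hc)]
    exact GfBBM.deriv_momentum_pos_of_one_lt hα hc
  refine ⟨hlow, hhigh, ?_⟩
  rintro c (hc | hc)
  · exact (hlow c hc).ne
  · exact (hhigh c hc).ne'
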